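/- For the Polar Coordinates point set P_n, there exists r > 0 such that for all unit vectors u with ‖u − N‖ < r (N the North Pole), any plane with normal vector u intersects at most one orbit of P_n; consequently any cap with normal direction u contains, on its boundary, points from at most one latitude circle of P_n. -/

import Mathlib

open Metric Real
noncomputable section
abbrev E3 := EuclideanSpace ℝ (Fin 3)

/-- The North Pole `(0,0,1)`. -/
def NP : E3 := (WithLp.equiv 2 (Fin 3 → ℝ)).symm ![0, 0, 1]

/-!
Since `⟪u, x⟫ - ⟪u, y⟫ = 0`, the heights of two points `x, y` of the unit sphere lying on a
common plane with normal `u` differ by `|⟪N, x - y⟫| = |⟪N - u, x - y⟫| ≤ 2 ‖u - N‖`. The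
latitudes of `P_n` are finitely many distinct heights, so they are separated by some `δ > 0`,
and `r = δ / 2` works.
-/

theorem abs_inner_sub_inner_le_of_inner_eq {F : Type*} [NormedAddCommGroup F]
    [InnerProductSpace ℝ F] {u x y : F} (v : F) (h : inner ℝ u x = inner ℝ u y) :
    |inner ℝ v x - inner ℝ v y| ≤ ‖v - u‖ * ‖x - y‖ :=
  calc |inner ℝ v x - inner ℝ v y| = |inner ℝ (v - u) (x - y)| := by
        rw [inner_sub_left, inner_sub_right, inner_sub_right, h]; ring_nf
    _ ≤ ‖v - u‖ * ‖x - y‖ := abs_real_inner_le_norm _ _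

theorem StrictMonoOn.exists_pos_le_sub {f : ℕ → ℝ} {n : ℕ} (hf : StrictMonoOn f (Set.Iic n)) :
    ∃ δ > 0, ∀ j k, j < k → k ≤ n → δ ≤ f k - f j := by
  induction n with
  | zero => exact ⟨1, one_pos, fun j k hjk hk => by omega⟩
  | succ n ih =>
    obtain ⟨δ, hδ, hgap⟩ := ih (hf.mono (Set.Iic_subset_Iic.2 n.le_succ))
    have hstep : f n < f (n + 1) := hf (Set.mem_Iic.2 n.le_succ) Set.self_mem_Iic n.lt_succ_self
    refine ⟨min δ (f (n + 1) - f n), lt_min hδ (sub_pos.2 hstep), fun j k hjk hk => ?_⟩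
    rcases hk.lt_or_eq with hk | rfl
    · exact (min_le_left _ _).trans (hgap j k hjk (Nat.lt_succ_iff.1 hk))
    · have hjn : f j ≤ f n := hf.monotoneOn (Set.mem_Iic.2 (by omega))
        (Set.mem_Iic.2 n.le_succ) (Nat.lt_succ_iff.1 hjk)
      exact (min_le_right _ _).trans (by linarith)

theorem strictMonoOn_sin_latitude {n : ℕ} (hn : 1 ≤ n) :
    StrictMonoOn (fun j : ℕ => sin (π * j / n - π / 2)) (Set.Iic n) := by
  have hn' : (0 : ℝ) < n := by exact_mod_cast hn
  have mem : ∀ j ∈ Set.Iic n, π * j / n - π / 2 ∈ Set.Icc (-(π / 2)) (π / 2) := by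
    intro j hj
    have hjn : (j : ℝ) ≤ n := by exact_mod_cast Set.mem_Iic.1 hj
    have hle : π * j / n ≤ π := by
      rw [div_le_iff₀ hn']; exact mul_le_mul_of_nonneg_left hjn pi_pos.le
    constructor <;> nlinarith [pi_pos, show 0 ≤ π * j / n by positivity]
  intro j hj k hk hjk
  refine strictMonoOn_sin (mem j hj) (mem k hk) (sub_lt_sub_right ?_ _)
  gcongr

theorem inner_NP (x : E3) : inner ℝ NP x = x 2 := by
  simp [NP, PiLp.inner_apply, Fin.sum_univ_three]

/-- For the Polar Coordinates set `P_n`, whose orbits are the latitude circles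
`{x ∈ S² : x₃ = sin (πj/n − π/2)}`, `j = 1, …, n−1`, there is `r > 0` such that any
plane whose unit normal is within distance `r` of the North Pole meets at most one
orbit. -/
theorem stmt19 (n : ℕ) (hn : 1 ≤ n) :
    ∃ r : ℝ, 0 < r ∧ ∀ u : E3, ‖u‖ = 1 → ‖u - NP‖ < r → ∀ h : ℝ,
      ∀ j k : ℕ, 1 ≤ j → j < k → k ≤ n - 1 →
        ¬ ((∃ x : E3, x ∈ sphere (0 : E3) 1 ∧ x 2 = Real.sin (π * j / n - π / 2) ∧
              (inner ℝ u x : ℝ) = h) ∧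
           (∃ y : E3, y ∈ sphere (0 : E3) 1 ∧ y 2 = Real.sin (π * k / n - π / 2) ∧
              (inner ℝ u y : ℝ) = h)) := by
  obtain ⟨δ, hδ, hgap⟩ := (strictMonoOn_sin_latitude hn).exists_pos_le_sub
  refine ⟨δ / 2, by positivity, fun u _ hu h j k _ hjk hk
    ⟨⟨x, hx, hxj, hxh⟩, ⟨y, hy, hyk, hyh⟩⟩ => ?_⟩
  have hxy : ‖x - y‖ ≤ 2 := by
    have := norm_sub_le x y
    rw [mem_sphere_zero_iff_norm] at hx hy
    linarith
  have hheight := abs_inner_sub_inner_le_of_inner_eq NP (hxh.trans hyh.symm)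
  rw [inner_NP, inner_NP, hxj, hyk, norm_sub_rev] at hheight
  have hsep := hgap j k hjk (by omega)
  have hclose : ‖u - NP‖ * ‖x - y‖ < δ := by nlinarith [norm_nonneg (u - NP), norm_nonneg (x - y)]
  linarith [neg_abs_le (sin (π * j / n - π / 2) - sin (π * k / n - π / 2))]
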